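/- Let L = {(0,0),(0,1),(1,0),(3,3)} ⊆ ℤ₄² and T = L^m ⊆ ℤ₄^{2m} (m-fold product, viewing ℤ₄^{2m} as (ℤ₄²)^m). Then the number of x ∈ ℤ₄^{2m} admitting at least one representation x = t₁ − t₂ with t₁, t₂ ∈ T equals 13^m, and the number of x admitting at least one representation x = t₁ + t₂ equals 10^m. -/

import Mathlib

/-! Sumsets and difference sets of a power `L^m` are taken coordinatewise, so they are the
`m`-th powers of `L + L` and `L - L`, which have 10 and 13 elements. -/

open Fintype Pointwise

def Lset : Finset (ZMod 4 × ZMod 4) := {(0, 0), (0, 1), (1, 0), (3, 3)}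

def Lpow (m : ℕ) : Finset (Fin m → ZMod 4 × ZMod 4) :=
  Finset.univ.filter fun t => ∀ j, t j ∈ Lset

lemma Lpow_eq_piFinset (m : ℕ) : Lpow m = piFinset fun _ => Lset := by
  ext t
  simp [Lpow]

lemma card_Lset_sub_Lset : (Lset - Lset).card = 13 := by decide

lemma card_Lset_add_Lset : (Lset + Lset).card = 10 := by decide

/-- for `T = L^m`, the number of `x` admitting at least one representation
`x = t₁ - t₂` with `t₁, t₂ ∈ T` equals `13^m`, and the number of `x` admitting at least one
representation `x = t₁ + t₂` equals `10^m`. -/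
theorem stmt16 (m : ℕ) :
    (((Lpow m) ×ˢ (Lpow m)).image fun p => p.1 - p.2).card = 13 ^ m ∧
    (((Lpow m) ×ˢ (Lpow m)).image fun p => p.1 + p.2).card = 10 ^ m := by
  rw [Finset.image_sub_product, Finset.image_add_product, Lpow_eq_piFinset,
    ← piFinset_sub, ← piFinset_add, card_piFinset_const, card_piFinset_const,
    card_Lset_sub_Lset, card_Lset_add_Lset]
  exact ⟨rfl, rfl⟩
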